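/- arXiv:1705.07252 — 3 statements merged into one kernel-verified Lean document; each statement's English description precedes it below -/
import Mathlib

section
/- In the near-optimal index argument for the capped-simplex projection: suppose η_1 ≤ ⋯ ≤ η_n are nonnegative with ∑η_i = 1, and define ς_i = ∑_{j ≥ i}(η_j - ν) and Ω_i = ∑_{j < i} η_j. If for some index i* we have ς_{i*} ≥ 0, η_{i*} < ν, and η_{i*}(1 + ς_{i*}/Ω_{i*}) < ν with Ω_{i*} > 0, then ς_{i*+1} > 0 and η_{i*}(1 + ς_{i*+1}/Ω_{i*+1}) < ν. -/
/-!
Passing from `i*` to `i* + 1` moves the mass `η_{i*}` into `Ω` and adds `ν - η_{i*} > 0` to `ς`.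
After clearing the denominator `Ω`, the condition `η (1 + ς / Ω) < ν` reads `η (Ω + ς) < ν Ω`.
The left side then grows by `η (η + (ν - η)) = η ν` and the right side by `ν η`, so the
inequality still holds.
-/

lemma mul_one_add_div_lt_iff {a s Ω ν : ℝ} (hΩ : 0 < Ω) :
    a * (1 + s / Ω) < ν ↔ a * (Ω + s) < ν * Ω := by
  rw [one_add_div hΩ.ne', mul_div_assoc', div_lt_iff₀ hΩ]

lemma mul_one_add_div_lt_of_shift {a s Ω ν : ℝ} (ha : 0 ≤ a) (hΩ : 0 < Ω)
    (h : a * (1 + s / Ω) < ν) : a * (1 + (s + (ν - a)) / (Ω + a)) < ν := by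
  rw [mul_one_add_div_lt_iff hΩ] at h
  rw [mul_one_add_div_lt_iff (by linarith)]
  linarith

open Finset in
theorem stmt_8_general (n : ℕ) (ν : ℝ)
    (η : ℕ → ℝ) (hpos : ∀ i < n, 0 ≤ η i)
    (ς Ω : ℕ → ℝ)
    (hς : ∀ i, ς i = ∑ j ∈ Ico i n, (η j - ν))
    (hΩ : ∀ i, Ω i = ∑ j ∈ range i, η j)
    (istar : ℕ) (histar : istar < n)
    (h1 : 0 ≤ ς istar) (h2 : η istar < ν) (h3 : 0 < Ω istar)
    (h4 : η istar * (1 + ς istar / Ω istar) < ν) :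
    0 < ς (istar + 1) ∧ η istar * (1 + ς (istar + 1) / Ω (istar + 1)) < ν := by
  have hς_succ : ς (istar + 1) = ς istar + (ν - η istar) := by
    rw [hς, hς, sum_eq_sum_Ico_succ_bot histar]
    ring
  have hΩ_succ : Ω (istar + 1) = Ω istar + η istar := by
    rw [hΩ, hΩ, sum_range_succ]
  refine ⟨by linarith, ?_⟩
  rw [hς_succ, hΩ_succ]
  exact mul_one_add_div_lt_of_shift (hpos istar histar) h3 h4

open Finset in
theorem stmt_8 (n : ℕ) (ν : ℝ) (hν : ν ∈ Set.Ioo (0 : ℝ) 1)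
    (η : ℕ → ℝ) (hpos : ∀ i < n, 0 ≤ η i)
    (hsorted : ∀ i j, i ≤ j → j < n → η i ≤ η j)
    (hsum : ∑ i ∈ range n, η i = 1)
    (ς Ω : ℕ → ℝ)
    (hς : ∀ i, ς i = ∑ j ∈ Ico i n, (η j - ν))
    (hΩ : ∀ i, Ω i = ∑ j ∈ range i, η j)
    (istar : ℕ) (histar : istar < n)
    (h1 : 0 ≤ ς istar) (h2 : η istar < ν) (h3 : 0 < Ω istar)
    (h4 : η istar * (1 + ς istar / Ω istar) < ν) :
    0 < ς (istar + 1) ∧ η istar * (1 + ς (istar + 1) / Ω (istar + 1)) < ν :=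
  stmt_8_general n ν η hpos ς Ω hς hΩ istar histar h1 h2 h3 h4
end

section
/- Let S ⊆ ℝ^m be a nonempty compact convex subset of the probability simplex contained in the relative interior, H the negative entropy, V the KL Bregman divergence, and let x₂ = argmin_{z ∈ S} { V_{x₁}(z)/τ + γH(z) } for x₁ ∈ S and τ, γ > 0. Then for every u ∈ S: (1/τ)V_{x₁}(u) - (1/τ + γ)V_{x₂}(u) - (1/(2τ))‖x₂ - x₁‖₁² ≥ γH(x₂) - γH(u). -/
/-!
With `H(z) = ∑ zᵢ log zᵢ` and `V_x(z) = ∑ zᵢ log (zᵢ / xᵢ)`, the three-point identity gives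
`V_{x₁}(u) - V_{x₂}(u) - V_{x₁}(x₂) = ⟨log x₂ - log x₁, u - x₂⟩` and, taking `x₁ = 1`,
`H(u) - H(x₂) - V_{x₂}(u) = ⟨log x₂, u - x₂⟩`. First-order optimality of `x₂` for
`V_{x₁}/τ + γ H` over the convex set `S` says
`⟨log x₂ - log x₁, u - x₂⟩ / τ + γ ⟨log x₂, u - x₂⟩ ≥ 0`; the constant part of the gradient
drops out because `u` and `x₂` have the same mass. What remains is
`V_{x₁}(x₂) ≥ ‖x₂ - x₁‖₁² / 2`, Pinsker's inequality, which follows from Sedrakyan's form of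
Cauchy–Schwarz and the pointwise bound `3 (t - 1)² ≤ 2 (t + 2) (t log t - t + 1)`: the
difference is a convex function of `t > 0` vanishing to second order at `t = 1`.
-/

open Real Finset

theorem sq_sub_one_le_mul_mul_log_sub_add_one {t : ℝ} (ht : 0 < t) :
    3 * (t - 1) ^ 2 ≤ 2 * (t + 2) * (t * log t - t + 1) := by
  let f : ℝ → ℝ := fun s ↦ 2 * (s + 2) * (s * log s - s + 1) - 3 * (s - 1) ^ 2
  let f' : ℝ → ℝ := fun s ↦ 2 * (s * log s - s + 1) + 2 * (s + 2) * log s - 6 * (s - 1)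
  have hf : ∀ s ∈ Set.Ioi (0 : ℝ), HasDerivAt f (f' s) s := fun s (hs : 0 < s) ↦ by
    have := ((((hasDerivAt_id s).add_const 2).const_mul 2).mul
      (((hasDerivAt_mul_log hs.ne').sub (hasDerivAt_id s)).add_const 1)).sub
      ((((hasDerivAt_id s).sub_const 1).pow 2).const_mul 3)
    refine this.congr_deriv ?_
    simp only [f', Pi.sub_apply, id]
    ring
  have hf' : ∀ s ∈ Set.Ioi (0 : ℝ), HasDerivAt f' (4 * (log s + s⁻¹ - 1)) s :=
      fun s (hs : 0 < s) ↦ by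
    have := ((((hasDerivAt_mul_log hs.ne').sub (hasDerivAt_id s)).add_const 1).const_mul 2
      |>.add ((((hasDerivAt_id s).add_const 2).const_mul 2).mul (hasDerivAt_log hs.ne'))).sub
      (((hasDerivAt_id s).sub_const 1).const_mul 6)
    refine this.congr_deriv ?_
    simp only [id]
    field_simp
    ring
  have hconv : ConvexOn ℝ (Set.Ioi 0) f := by
    refine convexOn_of_hasDerivWithinAt2_nonneg (f' := f') (f'' := fun s ↦ 4 * (log s + s⁻¹ - 1))
      (convex_Ioi 0)
      (fun s hs ↦ (hf s hs).continuousAt.continuousWithinAt) ?_ ?_ ?_ <;>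
      simp only [interior_Ioi]
    · exact fun s hs ↦ (hf s hs).hasDerivWithinAt
    · exact fun s hs ↦ (hf' s hs).hasDerivWithinAt
    · exact fun s hs ↦ by linarith [one_sub_inv_le_log_of_pos (Set.mem_Ioi.mp hs)]
  have hcrit : derivWithin f (Set.Ioi 1) 1 = 0 := by
    rw [(hf 1 (Set.mem_Ioi.mpr one_pos)).hasDerivWithinAt.derivWithin (uniqueDiffWithinAt_Ioi 1)]
    norm_num [f']
  simpa [f] using hconv.isMinOn_of_rightDeriv_eq_zero (by simp) hcrit ht

theorem sq_sub_le_mul_mul_log_div_sub_add {a b : ℝ} (ha : 0 < a) (hb : 0 < b) :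
    3 * (a - b) ^ 2 ≤ 2 * (a + 2 * b) * (a * log (a / b) - a + b) := by
  have hb' : b ≠ 0 := hb.ne'
  calc 3 * (a - b) ^ 2 = b ^ 2 * (3 * (a / b - 1) ^ 2) := by field_simp
    _ ≤ b ^ 2 * (2 * (a / b + 2) * (a / b * log (a / b) - a / b + 1)) :=
      mul_le_mul_of_nonneg_left (sq_sub_one_le_mul_mul_log_sub_add_one (div_pos ha hb))
        (sq_nonneg b)
    _ = 2 * (a + 2 * b) * (a * log (a / b) - a + b) := by field_simp

theorem sq_sum_abs_sub_le_two_mul_sum_mul_log_div {ι : Type*} [Fintype ι] {p q : ι → ℝ}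
    (hp : ∀ i, 0 < p i) (hq : ∀ i, 0 < q i) (hp1 : ∑ i, p i = 1) (hq1 : ∑ i, q i = 1) :
    (∑ i, |p i - q i|) ^ 2 ≤ 2 * ∑ i, p i * log (p i / q i) := by
  have hw : ∀ i, 0 < p i + 2 * q i := fun i ↦ by linarith [hp i, hq i]
  have hw3 : ∑ i, (p i + 2 * q i) = 3 := by
    rw [sum_add_distrib, ← mul_sum, hp1, hq1]; norm_num
  have hkl : ∑ i, (p i * log (p i / q i) - p i + q i) = ∑ i, p i * log (p i / q i) := by
    rw [sum_add_distrib, sum_sub_distrib, hp1, hq1]; ring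
  calc (∑ i, |p i - q i|) ^ 2 = 3 * ((∑ i, |p i - q i|) ^ 2 / ∑ i, (p i + 2 * q i)) := by
        rw [hw3]; ring
    _ ≤ 3 * ∑ i, |p i - q i| ^ 2 / (p i + 2 * q i) := by
        gcongr; exact sq_sum_div_le_sum_sq_div univ _ fun i _ ↦ hw i
    _ ≤ 3 * ∑ i, 2 / 3 * (p i * log (p i / q i) - p i + q i) := by
        gcongr with i
        rw [sq_abs, div_le_iff₀ (hw i)]
        linarith [sq_sub_le_mul_mul_log_div_sub_add (hp i) (hq i)]
    _ = 2 * ∑ i, p i * log (p i / q i) := by rw [← mul_sum, hkl]; ring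

theorem sum_mul_sub_nonneg_of_isMinOn {ι : Type*} [Fintype ι] {S : Set (ι → ℝ)}
    (hS : Convex ℝ S) {φ : ι → ℝ → ℝ} {φ' : ι → ℝ} {x u : ι → ℝ}
    (hmin : IsMinOn (fun z ↦ ∑ i, φ i (z i)) S x) (hx : x ∈ S) (hu : u ∈ S)
    (hφ : ∀ i, HasDerivAt (φ i) (φ' i) (x i)) :
    0 ≤ ∑ i, φ' i * (u i - x i) := by
  have hF : HasFDerivAt (fun z ↦ ∑ i, φ i (z i)) (∑ i, φ' i • ContinuousLinearMap.proj i) x :=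
    HasFDerivAt.fun_sum fun i _ ↦ (hφ i).comp_hasFDerivAt x (hasFDerivAt_apply (𝕜 := ℝ) i x)
  simpa using hmin.localize.hasFDerivWithinAt_nonneg hF.hasFDerivWithinAt
    (sub_mem_posTangentConeAt_of_segment_subset (hS.segment_subset hx hu))

theorem hasDerivAt_mul_log_div {c x : ℝ} (hc : c ≠ 0) (hx : x ≠ 0) :
    HasDerivAt (fun s ↦ s * log (s / c)) (log (x / c) + 1) x := by
  refine ((hasDerivAt_id x).mul
    (((hasDerivAt_id x).div_const c).log (div_ne_zero hx hc))).congr_deriv ?_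
  simp only [id]
  field_simp

theorem sum_mul_log_div_three_point {ι : Type*} [Fintype ι] {x y : ι → ℝ}
    (hx : ∀ i, x i ≠ 0) (hy : ∀ i, y i ≠ 0) (u : ι → ℝ) :
    ∑ i, u i * log (u i / x i) - ∑ i, u i * log (u i / y i) - ∑ i, y i * log (y i / x i)
      = ∑ i, (u i - y i) * log (y i / x i) := by
  have hterm : ∀ i, u i * log (u i / x i) - u i * log (u i / y i) = u i * log (y i / x i) := by
    intro i
    rcases eq_or_ne (u i) 0 with hu | hu
    · simp [hu]
    · rw [log_div hu (hx i), log_div hu (hy i), log_div (hy i) (hx i)]; ring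
  simp only [← sum_sub_distrib, hterm, sub_mul]

theorem variational_inequality_kl_prox {ι : Type*} [Fintype ι] {S : Set (ι → ℝ)}
    (hS : Convex ℝ S) {τ γ : ℝ} {x₁ x₂ u : ι → ℝ} (hx₁ : ∀ i, x₁ i ≠ 0) (hx₂ : ∀ i, x₂ i ≠ 0)
    (hx₂S : x₂ ∈ S) (hu : u ∈ S) (hsum : ∑ i, u i = ∑ i, x₂ i)
    (hmin : ∀ z ∈ S,
      (∑ i, x₂ i * log (x₂ i / x₁ i)) / τ + γ * ∑ i, x₂ i * log (x₂ i)
        ≤ (∑ i, z i * log (z i / x₁ i)) / τ + γ * ∑ i, z i * log (z i)) :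
    0 ≤ (∑ i, (u i - x₂ i) * log (x₂ i / x₁ i)) / τ + γ * ∑ i, (u i - x₂ i) * log (x₂ i) := by
  let φ : ι → ℝ → ℝ := fun i s ↦ s * log (s / x₁ i) / τ + γ * (s * log s)
  have hφ : ∀ z : ι → ℝ, ∑ i, φ i (z i)
      = (∑ i, z i * log (z i / x₁ i)) / τ + γ * ∑ i, z i * log (z i) := fun z ↦ by
    simp only [φ, sum_add_distrib, sum_div, mul_sum]
  have hmin' : IsMinOn (fun z ↦ ∑ i, φ i (z i)) S x₂ := fun z hz ↦ by
    simpa only [Set.mem_ofPred_eq, hφ] using hmin z hz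
  have hvi := sum_mul_sub_nonneg_of_isMinOn hS hmin' hx₂S hu fun i ↦
    ((hasDerivAt_mul_log_div (hx₁ i) (hx₂ i)).div_const τ).add
      ((hasDerivAt_mul_log (hx₂ i)).const_mul γ)
  have hterm : ∀ i, ((log (x₂ i / x₁ i) + 1) / τ + γ * (log (x₂ i) + 1)) * (u i - x₂ i)
      = (u i - x₂ i) * log (x₂ i / x₁ i) / τ + γ * ((u i - x₂ i) * log (x₂ i))
        + (1 / τ + γ) * (u i - x₂ i) := fun i ↦ by ring
  rwa [sum_congr rfl fun i _ ↦ hterm i, sum_add_distrib, sum_add_distrib, ← mul_sum, ← sum_div,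
    ← mul_sum, sum_sub_distrib, hsum, sub_self, mul_zero, add_zero] at hvi

theorem stmt_11_general (m : ℕ) (S : Set (Fin m → ℝ))
    (hSconv : Convex ℝ S)
    (hSsub : S ⊆ stdSimplex ℝ (Fin m)) (hSpos : ∀ z ∈ S, ∀ i, 0 < z i)
    (τ γ : ℝ) (hτ : 0 < τ)
    (x₁ : Fin m → ℝ) (hx₁ : x₁ ∈ S)
    (x₂ : Fin m → ℝ) (hx₂ : x₂ ∈ S)
    (hx₂min : ∀ z ∈ S,
      (∑ i, x₂ i * Real.log (x₂ i / x₁ i)) / τ + γ * ∑ i, x₂ i * Real.log (x₂ i)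
        ≤ (∑ i, z i * Real.log (z i / x₁ i)) / τ + γ * ∑ i, z i * Real.log (z i)) :
    ∀ u ∈ S,
      γ * (∑ i, x₂ i * Real.log (x₂ i)) - γ * ∑ i, u i * Real.log (u i)
        ≤ (1 / τ) * (∑ i, u i * Real.log (u i / x₁ i))
          - (1 / τ + γ) * (∑ i, u i * Real.log (u i / x₂ i))
          - (1 / (2 * τ)) * (∑ i, |x₂ i - x₁ i|) ^ 2 := by
  intro u hu
  have hne : ∀ z ∈ S, ∀ i, z i ≠ 0 := fun z hz i ↦ (hSpos z hz i).ne'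
  have hsum : ∀ z ∈ S, ∑ i, z i = 1 := fun z hz ↦ (hSsub hz).2
  have hthree := sum_mul_log_div_three_point (hne x₁ hx₁) (hne x₂ hx₂) u
  have hent := sum_mul_log_div_three_point (x := fun _ ↦ 1) (fun _ ↦ one_ne_zero) (hne x₂ hx₂) u
  simp only [div_one] at hent
  have hvi := variational_inequality_kl_prox hSconv (hne x₁ hx₁) (hne x₂ hx₂) hx₂ hu
    ((hsum u hu).trans (hsum x₂ hx₂).symm) hx₂min
  have hpinsker := sq_sum_abs_sub_le_two_mul_sum_mul_log_div (hSpos x₂ hx₂) (hSpos x₁ hx₁)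
    (hsum x₂ hx₂) (hsum x₁ hx₁)
  linear_combination hvi + (1 / (2 * τ)) * hpinsker + (-1 / τ) * hthree - γ * hent

theorem stmt_11 (m : ℕ) (S : Set (Fin m → ℝ)) (hSne : S.Nonempty)
    (hScomp : IsCompact S) (hSconv : Convex ℝ S)
    (hSsub : S ⊆ stdSimplex ℝ (Fin m)) (hSpos : ∀ z ∈ S, ∀ i, 0 < z i)
    (τ γ : ℝ) (hτ : 0 < τ) (hγ : 0 < γ)
    (x₁ : Fin m → ℝ) (hx₁ : x₁ ∈ S)
    (x₂ : Fin m → ℝ) (hx₂ : x₂ ∈ S)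
    (hx₂min : ∀ z ∈ S,
      (∑ i, x₂ i * Real.log (x₂ i / x₁ i)) / τ + γ * ∑ i, x₂ i * Real.log (x₂ i)
        ≤ (∑ i, z i * Real.log (z i / x₁ i)) / τ + γ * ∑ i, z i * Real.log (z i)) :
    ∀ u ∈ S,
      γ * (∑ i, x₂ i * Real.log (x₂ i)) - γ * ∑ i, u i * Real.log (u i)
        ≤ (1 / τ) * (∑ i, u i * Real.log (u i / x₁ i))
          - (1 / τ + γ) * (∑ i, u i * Real.log (u i / x₂ i))
          - (1 / (2 * τ)) * (∑ i, |x₂ i - x₁ i|) ^ 2 :=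
  stmt_11_general m S hSconv hSsub hSpos τ γ hτ x₁ hx₁ x₂ hx₂ hx₂min
end

section
/- Let η* be the minimizer of a strictly convex function over the capped simplex D = {η ∈ Δ_n : 0 ≤ η_i ≤ ν}. If the unconstrained-over-Δ_n minimizer has the multiplicative form η̃_i/Z with η̃_i > 0, and i* is the largest index (after sorting η̃/Z in increasing order) with ς_{i*} := ∑_{j≥i*}(η̃_j/Z − ν) ≥ 0 and (η̃_{i*−1}/Z)(1 + ς_{i*}/Ω_{i*}) < ν where Ω_{i*} = ∑_{j<i*} η̃_j/Z, then the vector η with η_i = (η̃_i/Z)(1 + ς_{i*}/Ω_{i*}) for i < i* and η_i = ν for i ≥ i* satisfies η ∈ D, ∑ η_i = 1, and the KKT conditions of the constrained problem, hence equals η*. -/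
/-!
Write the objective as `∑ₖ (aₖ vₖ + s vₖ log vₖ)` with `a = c - log η₀ / τ` and
`s = γ/d + 1/τ > 0`. Since `p = η̃/Z` is an interior minimizer over the simplex, the partial
derivatives `aₖ + s (log pₖ + 1)` share a common value `μ`. Below `i*` the candidate is `p`
scaled by `K = 1 + ς/Ω`, which shifts the derivative by `s log K`; from `i*` on it is capped at
`ν`. Hence `λ = -(μ + s log K)` and `αₖ = s log (pₖ K / ν)` on the capped coordinates solve the
KKT system, and `αₖ ≥ 0` is the inequality `ν ≤ pₖ K`, which the maximality of `i*` gives at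
`k = i*` and the sorting propagates. By the tangent inequality for `x log x`, a KKT point of this
convex separable objective is a minimizer, and strict convexity makes the minimizer unique.
-/

open Finset Real Filter Topology

lemma Real.mul_log_sub_mul_log_le {u v : ℝ} (hu : 0 ≤ u) (hv : 0 < v) :
    v * log v - u * log u ≤ (log v + 1) * (v - u) := by
  rcases hu.eq_or_lt with rfl | hu
  · simp only [log_zero, mul_zero, sub_zero]
    linarith
  have hlog : log (v / u) ≤ v / u - 1 := log_le_sub_one_of_pos (div_pos hv hu)
  rw [log_div hv.ne' hu.ne'] at hlog
  have := mul_le_mul_of_nonneg_left hlog hu.le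
  have hcancel : u * (v / u) = v := by field_simp
  nlinarith

noncomputable def linEntropy (n : ℕ) (a : ℕ → ℝ) (s : ℝ) (v : ℕ → ℝ) : ℝ :=
  ∑ k ∈ range n, (a k * v k + s * (v k * log (v k)))

section linEntropy

variable {n : ℕ} {a : ℕ → ℝ} {s : ℝ}

lemma linEntropy_eq_sum_add_entropy_add_kl {c η₀ : ℕ → ℝ} (hη₀ : ∀ k < n, η₀ k ≠ 0)
    (β κ : ℝ) (v : ℕ → ℝ) :
    linEntropy n (fun k => c k - κ * log (η₀ k)) (β + κ) v
      = (∑ k ∈ range n, c k * v k) + β * (∑ k ∈ range n, v k * log (v k))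
        + κ * ∑ k ∈ range n, v k * log (v k / η₀ k) := by
  rw [linEntropy, mul_sum, mul_sum, ← sum_add_distrib, ← sum_add_distrib]
  refine sum_congr rfl fun k hk => ?_
  rcases eq_or_ne (v k) 0 with hv | hv
  · simp [hv]
  · rw [log_div hv (hη₀ k (mem_range.1 hk))]
    ring

lemma linEntropy_sub_le (hs : 0 ≤ s) {u v : ℕ → ℝ} (hu : ∀ k < n, 0 ≤ u k)
    (hv : ∀ k < n, 0 < v k) :
    linEntropy n a s v - linEntropy n a s u
      ≤ ∑ k ∈ range n, (a k + s * (log (v k) + 1)) * (v k - u k) := by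
  rw [linEntropy, linEntropy, ← sum_sub_distrib]
  refine sum_le_sum fun k hk => ?_
  have := mul_le_mul_of_nonneg_left
    (mul_log_sub_mul_log_le (hu k (mem_range.1 hk)) (hv k (mem_range.1 hk))) hs
  linarith

lemma hasDerivAt_linEntropy_line {p : ℕ → ℝ} (hp : ∀ k < n, p k ≠ 0) (w : ℕ → ℝ) :
    HasDerivAt (fun ε => linEntropy n a s (fun k => p k + ε * w k))
      (∑ k ∈ range n, (a k + s * (log (p k) + 1)) * w k) 0 := by
  refine HasDerivAt.fun_sum fun k hk => ?_
  have hline : HasDerivAt (fun ε : ℝ => p k + ε * w k) (w k) 0 := by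
    simpa using ((hasDerivAt_id 0).mul_const (w k)).const_add (p k)
  have hmulLog : HasDerivAt (fun t => t * log t) (log (p k) + 1) (p k + 0 * w k) := by
    simpa using hasDerivAt_mul_log (hp k (mem_range.1 hk))
  convert (hline.const_mul (a k)).add ((hmulLog.comp 0 hline).const_mul s) using 1
  · rfl
  · ring

lemma linEntropy_deriv_eq_of_isMinOn_simplex {p : ℕ → ℝ} (hp : ∀ k < n, 0 < p k)
    (hpsum : ∑ k ∈ range n, p k = 1)
    (hmin : ∀ x : ℕ → ℝ, ∑ k ∈ range n, x k = 1 → (∀ k < n, 0 ≤ x k) →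
      linEntropy n a s p ≤ linEntropy n a s x)
    {i j : ℕ} (hi : i < n) (hj : j < n) :
    a i + s * (log (p i) + 1) = a j + s * (log (p j) + 1) := by
  set w : ℕ → ℝ := fun k => (if k = i then 1 else 0) - (if k = j then 1 else 0)
  have hwsum : ∑ k ∈ range n, w k = 0 := by
    simp [w, sum_sub_distrib, hi, hj]
  -- `p` is interior, so shifting mass between `i` and `j` in either direction stays feasible.
  have hlocal : IsLocalMin (fun ε => linEntropy n a s (fun k => p k + ε * w k)) 0 := by
    have hpos : ∀ᶠ ε in 𝓝 (0 : ℝ), ∀ k ∈ range n, 0 < p k + ε * w k := by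
      refine (eventually_all_finset _).2 fun k hk => ?_
      have hcont : Tendsto (fun ε : ℝ => p k + ε * w k) (𝓝 0) (𝓝 (p k)) :=
        (by fun_prop : Continuous fun ε : ℝ => p k + ε * w k).tendsto' 0 _ (by simp)
      exact hcont.eventually_const_lt (hp k (mem_range.1 hk))
    filter_upwards [hpos] with ε hε
    simp only [zero_mul, add_zero] at hε ⊢
    refine hmin _ ?_ fun k hk => (hε k (mem_range.2 hk)).le
    rw [sum_add_distrib, ← mul_sum, hwsum, mul_zero, add_zero]
    exact hpsum
  have hzero := hlocal.hasDerivAt_eq_zero (hasDerivAt_linEntropy_line (fun k hk => (hp k hk).ne') w)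
  simp only [w, mul_sub, mul_ite, mul_one, mul_zero, sum_sub_distrib, sum_ite_eq', mem_range,
    hi, hj, if_true] at hzero
  linarith

lemma linEntropy_le_of_kkt (hs : 0 ≤ s) {η α x : ℕ → ℝ} {lam ν : ℝ}
    (hη : ∀ k < n, 0 < η k) (hηsum : ∑ k ∈ range n, η k = 1)
    (hα : ∀ k < n, 0 ≤ α k) (hcompl : ∀ k < n, α k * (η k - ν) = 0)
    (hstat : ∀ k < n, a k + s * (log (η k) + 1) + lam + α k = 0)
    (hxsum : ∑ k ∈ range n, x k = 1) (hx : ∀ k < n, 0 ≤ x k ∧ x k ≤ ν) :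
    linEntropy n a s η ≤ linEntropy n a s x := by
  have htangent := linEntropy_sub_le (a := a) hs (fun k hk => (hx k hk).1) hη
  have hfirstOrder : ∑ k ∈ range n, (a k + s * (log (η k) + 1)) * (η k - x k) ≤ 0 :=
    calc ∑ k ∈ range n, (a k + s * (log (η k) + 1)) * (η k - x k)
        = ∑ k ∈ range n, (-lam * (η k - x k) - α k * (η k - x k)) :=
          sum_congr rfl fun k hk => by linear_combination (η k - x k) * hstat k (mem_range.1 hk)
      _ = -lam * (∑ k ∈ range n, η k - ∑ k ∈ range n, x k)
            - ∑ k ∈ range n, α k * (η k - x k) := by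
          rw [sum_sub_distrib, ← mul_sum, sum_sub_distrib]
      _ ≤ 0 := by
          rw [hηsum, hxsum, sub_self, mul_zero, zero_sub, neg_nonpos]
          refine sum_nonneg fun k hk => ?_
          have hk := mem_range.1 hk
          nlinarith [hα k hk, hcompl k hk, (hx k hk).2]
  linarith

end linEntropy

noncomputable section cappedProjection

variable (n : ℕ) (p : ℕ → ℝ) (ν : ℝ)

-- `tailExcess` and `headMass` are the paper's `ς` and `Ω`.
def tailExcess (i : ℕ) : ℝ := ∑ j ∈ Ico i n, (p j - ν)

def headMass (i : ℕ) : ℝ := ∑ j ∈ range i, p j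

def cappedScale (i : ℕ) : ℝ := 1 + tailExcess n p ν i / headMass p i

def cappedProjection (i : ℕ) : ℕ → ℝ := fun k => if i ≤ k then ν else p k * cappedScale n p ν i

variable {n p ν}

lemma headMass_pos (hp : ∀ k < n, 0 < p k) {i : ℕ} (hi0 : 0 < i) (hin : i ≤ n) :
    0 < headMass p i :=
  sum_pos (fun j hj => hp j ((mem_range.1 hj).trans_le hin)) (nonempty_range_iff.2 hi0.ne')

lemma one_le_cappedScale {i : ℕ} (hexcess : 0 ≤ tailExcess n p ν i) (hmass : 0 < headMass p i) :
    1 ≤ cappedScale n p ν i :=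
  le_add_of_nonneg_right (div_nonneg hexcess hmass.le)

lemma tailExcess_eq (hpsum : ∑ k ∈ range n, p k = 1) {i : ℕ} (hin : i ≤ n) :
    tailExcess n p ν i = 1 - headMass p i - (n - i) * ν := by
  rw [← hpsum, tailExcess, headMass, ← sum_range_add_sum_Ico p hin, sum_sub_distrib, sum_const,
    Nat.card_Ico, nsmul_eq_mul, Nat.cast_sub hin]
  ring

lemma cappedScale_eq {i : ℕ} (hmass : 0 < headMass p i) :
    cappedScale n p ν i = (headMass p i + tailExcess n p ν i) / headMass p i := by
  rw [cappedScale, add_div, div_self hmass.ne']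

lemma le_mul_cappedScale {i : ℕ} (hin : i < n) (hpi : 0 ≤ p i) (hmass : 0 < headMass p i)
    (hexcess : 0 ≤ tailExcess n p ν i)
    (hnext : ¬(0 ≤ tailExcess n p ν (i + 1) ∧ p i * cappedScale n p ν (i + 1) < ν)) :
    ν ≤ p i * cappedScale n p ν i := by
  have hmass' : headMass p (i + 1) = headMass p i + p i := sum_range_succ _ _
  have hexcess' : tailExcess n p ν i = (p i - ν) + tailExcess n p ν (i + 1) :=
    sum_eq_sum_Ico_succ_bot hin _
  by_cases hnonneg : 0 ≤ tailExcess n p ν (i + 1)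
  · have hmassPos : 0 < headMass p (i + 1) := by linarith
    have hnext := not_lt.1 fun h => hnext ⟨hnonneg, h⟩
    rw [cappedScale_eq hmassPos, mul_div_assoc', le_div_iff₀ hmassPos] at hnext
    rw [cappedScale_eq hmass, mul_div_assoc', le_div_iff₀ hmass]
    nlinarith
  · have hK := one_le_cappedScale hexcess hmass
    nlinarith

lemma le_mul_cappedScale_of_le (hp : ∀ k < n, 0 < p k)
    (hmono : ∀ k l, k ≤ l → l < n → p k ≤ p l) {i : ℕ} (hmass : 0 < headMass p i)
    (hexcess : 0 ≤ tailExcess n p ν i)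
    (hnext : i + 1 ≤ n → ¬(0 ≤ tailExcess n p ν (i + 1) ∧ p i * cappedScale n p ν (i + 1) < ν)) :
    ∀ k, i ≤ k → k < n → ν ≤ p k * cappedScale n p ν i := fun k hik hk =>
  (le_mul_cappedScale (hik.trans_lt hk) (hp i (hik.trans_lt hk)).le hmass hexcess
    (hnext (hik.trans_lt hk))).trans
    (mul_le_mul_of_nonneg_right (hmono i k hik hk)
      (zero_le_one.trans (one_le_cappedScale hexcess hmass)))

lemma sum_cappedProjection (hpsum : ∑ k ∈ range n, p k = 1) {i : ℕ} (hin : i ≤ n)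
    (hmass : 0 < headMass p i) :
    ∑ k ∈ range n, cappedProjection n p ν i k = 1 := by
  have hhead : ∑ k ∈ range i, cappedProjection n p ν i k = headMass p i + tailExcess n p ν i :=
    calc ∑ k ∈ range i, cappedProjection n p ν i k
        = ∑ k ∈ range i, p k * cappedScale n p ν i :=
          sum_congr rfl fun k hk => if_neg (not_le.2 (mem_range.1 hk))
      _ = headMass p i + tailExcess n p ν i := by
          rw [← sum_mul, ← headMass, cappedScale_eq hmass, mul_div_cancel₀ _ hmass.ne']
  have htail : ∑ k ∈ Ico i n, cappedProjection n p ν i k = (n - i) * ν :=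
    calc ∑ k ∈ Ico i n, cappedProjection n p ν i k = ∑ k ∈ Ico i n, ν :=
          sum_congr rfl fun k hk => if_pos (mem_Ico.1 hk).1
      _ = (n - i) * ν := by rw [sum_const, Nat.card_Ico, nsmul_eq_mul, Nat.cast_sub hin]
  rw [← sum_range_add_sum_Ico _ hin, hhead, htail, tailExcess_eq hpsum hin]
  ring

lemma cappedProjection_mem_capped (hν : 0 ≤ ν) (hp : ∀ k < n, 0 ≤ p k)
    (hmono : ∀ k l, k ≤ l → l < n → p k ≤ p l) {i : ℕ} (hi0 : 0 < i) (hin : i ≤ n)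
    (hK : 0 ≤ cappedScale n p ν i) (hlast : p (i - 1) * cappedScale n p ν i < ν) :
    ∀ k < n, 0 ≤ cappedProjection n p ν i k ∧ cappedProjection n p ν i k ≤ ν := by
  intro k hk
  unfold cappedProjection
  split_ifs with hik
  · exact ⟨hν, le_rfl⟩
  · refine ⟨mul_nonneg (hp k hk) hK, (mul_le_mul_of_nonneg_right ?_ hK).trans hlast.le⟩
    exact hmono k (i - 1) (by omega) (by omega)

lemma cappedProjection_pos (hν : 0 < ν) (hp : ∀ k < n, 0 < p k) {i : ℕ}
    (hK : 0 < cappedScale n p ν i) : ∀ k < n, 0 < cappedProjection n p ν i k := by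
  intro k hk
  unfold cappedProjection
  split_ifs
  exacts [hν, mul_pos (hp k hk) hK]

lemma exists_kkt_cappedProjection {a : ℕ → ℝ} {s μ : ℝ} (hs : 0 ≤ s) (hν : 0 < ν)
    (hp : ∀ k < n, 0 < p k) {i : ℕ} (hK : 0 < cappedScale n p ν i)
    (hstat : ∀ k < n, a k + s * (log (p k) + 1) = μ)
    (hcap : ∀ k, i ≤ k → k < n → ν ≤ p k * cappedScale n p ν i) :
    ∃ lam : ℝ, ∃ α : ℕ → ℝ, (∀ k < n, 0 ≤ α k) ∧
      (∀ k < n, α k * (cappedProjection n p ν i k - ν) = 0) ∧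
      ∀ k < n, a k + s * (log (cappedProjection n p ν i k) + 1) + lam + α k = 0 := by
  set K := cappedScale n p ν i
  refine ⟨-(μ + s * log K), fun k => if i ≤ k then s * log (p k * K / ν) else 0,
    fun k hk => ?_, fun k hk => ?_, fun k hk => ?_⟩ <;>
    simp only [cappedProjection] <;> split_ifs with hik
  · exact mul_nonneg hs (log_nonneg ((one_le_div hν).2 (hcap k hik hk)))
  · exact le_rfl
  · ring
  · ring
  · rw [log_div (mul_pos (hp k hk) hK).ne' hν.ne', log_mul (hp k hk).ne' hK.ne']
    linear_combination hstat k hk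
  · rw [log_mul (hp k hk).ne' hK.ne']
    linear_combination hstat k hk

end cappedProjection

open Finset in
theorem stmt_14_general (n : ℕ) (ν γ τ d : ℝ)
    (hν : ν ∈ Set.Ioc (0 : ℝ) 1)
    (hγ : 0 < γ) (hτ : 0 < τ) (hd : 0 < d)
    (c η₀ : ℕ → ℝ) (hη₀pos : ∀ i < n, 0 < η₀ i)
    -- the objective function (strictly convex on the capped simplex)
    (F : (ℕ → ℝ) → ℝ)
    (hF : ∀ η, F η = (∑ i ∈ range n, c i * η i)
      + (γ / d) * (∑ i ∈ range n, η i * Real.log (η i))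
      + (1 / τ) * ∑ i ∈ range n, η i * Real.log (η i / η₀ i))
    (hFstrict : StrictConvexOn ℝ
      {η : ℕ → ℝ | (∑ i ∈ range n, η i = 1) ∧ ∀ i < n, 0 ≤ η i ∧ η i ≤ ν} F)
    -- the minimizer η* over the capped simplex D
    (ηstar : ℕ → ℝ)
    (hηstarD : (∑ i ∈ range n, ηstar i = 1) ∧ ∀ i < n, 0 ≤ ηstar i ∧ ηstar i ≤ ν)
    (hηstarmin : ∀ η : ℕ → ℝ,
      (∑ i ∈ range n, η i = 1) → (∀ i < n, 0 ≤ η i ∧ η i ≤ ν) → F ηstar ≤ F η)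
    -- the unconstrained-over-Δ_n minimizer has multiplicative form η̃ᵢ/Z,
    -- sorted in increasing order
    (ηt : ℕ → ℝ) (hηtpos : ∀ i < n, 0 < ηt i)
    (Z : ℝ) (hZ : Z = ∑ i ∈ range n, ηt i)
    (hsorted : ∀ i j, i ≤ j → j < n → ηt i ≤ ηt j)
    (hunc : ∀ η : ℕ → ℝ, (∑ i ∈ range n, η i = 1) → (∀ i < n, 0 ≤ η i) →
      F (fun i => ηt i / Z) ≤ F η)
    -- the quantities ς and Ω and the chosen index i*
    (ς Ωm : ℕ → ℝ)
    (hς : ∀ i, ς i = ∑ j ∈ Ico i n, (ηt j / Z - ν))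
    (hΩ : ∀ i, Ωm i = ∑ j ∈ range i, ηt j / Z)
    (istar : ℕ) (histar0 : 0 < istar) (histarn : istar ≤ n)
    (h1 : 0 ≤ ς istar)
    (h2 : (ηt (istar - 1) / Z) * (1 + ς istar / Ωm istar) < ν)
    (hlargest : ∀ j, istar < j → j ≤ n →
      ¬(0 ≤ ς j ∧ (ηt (j - 1) / Z) * (1 + ς j / Ωm j) < ν))
    -- the explicitly projected vector η
    (η : ℕ → ℝ)
    (hη : ∀ i, η i = if istar ≤ i then ν else (ηt i / Z) * (1 + ς istar / Ωm istar)) :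
    -- η is feasible, sums to 1, satisfies the KKT conditions, and equals η*
    (∀ i < n, 0 ≤ η i ∧ η i ≤ ν) ∧
    (∑ i ∈ range n, η i = 1) ∧
    (∃ lam : ℝ, ∃ α : ℕ → ℝ,
      (∀ i < n, 0 ≤ α i) ∧
      (∀ i < n, α i * (η i - ν) = 0) ∧
      (∀ i < n, c i + (γ / d) * (Real.log (η i) + 1)
        + (1 / τ) * (Real.log (η i / η₀ i) + 1) + lam + α i = 0)) ∧
    (∀ i < n, η i = ηstar i) := by
  have hn : 0 < n := histar0.trans_le histarn
  have hZ0 : 0 < Z :=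
    hZ ▸ sum_pos (fun i hi => hηtpos i (mem_range.1 hi)) (nonempty_range_iff.2 hn.ne')
  set p : ℕ → ℝ := fun i => ηt i / Z
  have hp : ∀ i < n, 0 < p i := fun i hi => div_pos (hηtpos i hi) hZ0
  have hpsum : ∑ i ∈ range n, p i = 1 := by rw [← sum_div, ← hZ, div_self hZ0.ne']
  have hmono : ∀ k l, k ≤ l → l < n → p k ≤ p l := fun k l hkl hl =>
    div_le_div_of_nonneg_right (hsorted k l hkl hl) hZ0.le
  obtain rfl : ς = tailExcess n p ν := funext hς
  obtain rfl : Ωm = headMass p := funext hΩ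
  obtain rfl : η = cappedProjection n p ν istar := funext hη
  set a : ℕ → ℝ := fun k => c k - 1 / τ * log (η₀ k)
  set s := γ / d + 1 / τ
  have hs : 0 < s := by positivity
  have hFG : ∀ v, F v = linEntropy n a s v := fun v =>
    (hF v).trans (linEntropy_eq_sum_add_entropy_add_kl (fun k hk => (hη₀pos k hk).ne') _ _ v).symm
  have hmass := headMass_pos hp histar0 histarn
  have hK := one_le_cappedScale h1 hmass
  have hcap := le_mul_cappedScale_of_le hp hmono hmass h1 (hlargest _ (Nat.lt_succ_self _))
  have hstat : ∀ k < n, a k + s * (log (p k) + 1) = a 0 + s * (log (p 0) + 1) := fun k hk =>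
    linEntropy_deriv_eq_of_isMinOn_simplex hp hpsum
      (fun x hx hx0 => by simpa only [hFG] using hunc x hx hx0) hk hn
  have hfeas := cappedProjection_mem_capped hν.1.le (fun k hk => (hp k hk).le) hmono histar0
    histarn (by linarith) h2
  have hsum := sum_cappedProjection (ν := ν) hpsum histarn hmass
  have hpos := cappedProjection_pos hν.1 hp (by linarith)
  obtain ⟨lam, α, hα, hcompl, hkkt⟩ :=
    exists_kkt_cappedProjection hs.le hν.1 hp (by linarith) hstat hcap
  have hunique : cappedProjection n p ν istar = ηstar := hFstrict.eq_of_isMinOn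
    (isMinOn_iff.2 fun x hx => by
      simpa only [hFG] using linEntropy_le_of_kkt hs.le hpos hsum hα hcompl hkkt hx.1 hx.2)
    (isMinOn_iff.2 fun x hx => hηstarmin x hx.1 hx.2) ⟨hsum, hfeas⟩ hηstarD
  refine ⟨hfeas, hsum, ⟨lam, α, hα, hcompl, fun k hk => ?_⟩, fun k _ => congrFun hunique k⟩
  rw [log_div (hpos k hk).ne' (hη₀pos k hk).ne']
  linear_combination hkkt k hk

open Finset in
/-- Equivalence of Rule 1 and Rule 2 for the ν-Saddle update: the explicit sorted
capped-simplex projection of the multiplicative-form simplex minimizer satisfies the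
KKT conditions of the capped-simplex problem, hence equals its minimizer. -/
theorem stmt_14 (n : ℕ) (ν γ τ d : ℝ)
    (hν : ν ∈ Set.Ioc (0 : ℝ) 1) (hnν : 1 ≤ (n : ℝ) * ν)
    (hγ : 0 < γ) (hτ : 0 < τ) (hd : 0 < d)
    (c η₀ : ℕ → ℝ) (hη₀pos : ∀ i < n, 0 < η₀ i)
    -- the objective function (strictly convex on the capped simplex)
    (F : (ℕ → ℝ) → ℝ)
    (hF : ∀ η, F η = (∑ i ∈ range n, c i * η i)
      + (γ / d) * (∑ i ∈ range n, η i * Real.log (η i))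
      + (1 / τ) * ∑ i ∈ range n, η i * Real.log (η i / η₀ i))
    (hFstrict : StrictConvexOn ℝ
      {η : ℕ → ℝ | (∑ i ∈ range n, η i = 1) ∧ ∀ i < n, 0 ≤ η i ∧ η i ≤ ν} F)
    -- the minimizer η* over the capped simplex D
    (ηstar : ℕ → ℝ)
    (hηstarD : (∑ i ∈ range n, ηstar i = 1) ∧ ∀ i < n, 0 ≤ ηstar i ∧ ηstar i ≤ ν)
    (hηstarmin : ∀ η : ℕ → ℝ,
      (∑ i ∈ range n, η i = 1) → (∀ i < n, 0 ≤ η i ∧ η i ≤ ν) → F ηstar ≤ F η)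
    -- the unconstrained-over-Δ_n minimizer has multiplicative form η̃ᵢ/Z,
    -- sorted in increasing order
    (ηt : ℕ → ℝ) (hηtpos : ∀ i < n, 0 < ηt i)
    (Z : ℝ) (hZ : Z = ∑ i ∈ range n, ηt i)
    (hsorted : ∀ i j, i ≤ j → j < n → ηt i ≤ ηt j)
    (hunc : ∀ η : ℕ → ℝ, (∑ i ∈ range n, η i = 1) → (∀ i < n, 0 ≤ η i) →
      F (fun i => ηt i / Z) ≤ F η)
    -- the quantities ς and Ω and the chosen index i*
    (ς Ωm : ℕ → ℝ)
    (hς : ∀ i, ς i = ∑ j ∈ Ico i n, (ηt j / Z - ν))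
    (hΩ : ∀ i, Ωm i = ∑ j ∈ range i, ηt j / Z)
    (istar : ℕ) (histar0 : 0 < istar) (histarn : istar ≤ n)
    (h1 : 0 ≤ ς istar)
    (h2 : (ηt (istar - 1) / Z) * (1 + ς istar / Ωm istar) < ν)
    (hlargest : ∀ j, istar < j → j ≤ n →
      ¬(0 ≤ ς j ∧ (ηt (j - 1) / Z) * (1 + ς j / Ωm j) < ν))
    -- the explicitly projected vector η
    (η : ℕ → ℝ)
    (hη : ∀ i, η i = if istar ≤ i then ν else (ηt i / Z) * (1 + ς istar / Ωm istar)) :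
    -- η is feasible, sums to 1, satisfies the KKT conditions, and equals η*
    (∀ i < n, 0 ≤ η i ∧ η i ≤ ν) ∧
    (∑ i ∈ range n, η i = 1) ∧
    (∃ lam : ℝ, ∃ α : ℕ → ℝ,
      (∀ i < n, 0 ≤ α i) ∧
      (∀ i < n, α i * (η i - ν) = 0) ∧
      (∀ i < n, c i + (γ / d) * (Real.log (η i) + 1)
        + (1 / τ) * (Real.log (η i / η₀ i) + 1) + lam + α i = 0)) ∧
    (∀ i < n, η i = ηstar i) :=
  stmt_14_general n ν γ τ d hν hγ hτ hd c η₀ hη₀pos F hF hFstrict ηstar hηstarD hηstarmin ηt hηtpos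
    Z hZ hsorted hunc ς Ωm hς hΩ istar histar0 histarn h1 h2 hlargest η hη
end
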